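/- For a maximal nested set F on a Dynkin-type diagram D, the map p_F sending each simple root (vertex) α to the minimal element B ∈ F containing the support of α is a bijection between the vertices of D and the elements of F. In the abstracted form: if F is a family of pairwise compatible connected vertex-subsets of a connected graph D on n vertices, containing D itself, that is maximal among such families, then |F| = n. -/

import Mathlib

/-!
Send each vertex `x` to the smallest member `m x` of `F` containing it; the members containing
`x` form a chain, so `m x` exists. The map is onto: a connected member `B` cannot be covered by
its proper sub-members, since a maximal one would be adjacent to a vertex of `B` outside it, and
the proper sub-member containing that vertex could be neither nested with it nor orthogonal to
it. The map is one-to-one: if `m x = m y = B` with `x ≠ y`, the maximal connected subset of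
`B \ {x}` containing `y` is compatible with every member of `F` but is not in `F`, contradicting
maximality.
-/

/-- Orthogonality for vertex subsets of a simple graph. -/
def Orthog {V : Type*} (G : SimpleGraph V) (s t : Finset V) : Prop :=
  Disjoint s t ∧ ∀ x ∈ s, ∀ y ∈ t, ¬ G.Adj x y

/-- Compatibility for vertex subsets. -/
def Compat {V : Type*} (G : SimpleGraph V) (s t : Finset V) : Prop :=
  s ⊆ t ∨ t ⊆ s ∨ Orthog G s t

/-- A nested set on a connected diagram `D`: a family of connected subsets,
pairwise compatible, containing the whole vertex set. -/
def IsNestedSet {V : Type*} [Fintype V] (G : SimpleGraph V)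
    (F : Finset (Finset V)) : Prop :=
  Finset.univ ∈ F ∧
  (∀ s ∈ F, (G.induce (s : Set V)).Connected) ∧
  (∀ s ∈ F, ∀ t ∈ F, Compat G s t)

open Finset SimpleGraph

section

variable {V : Type*} {G : SimpleGraph V}

lemma Orthog.symm {s t : Finset V} (h : Orthog G s t) : Orthog G t s :=
  ⟨h.1.symm, fun x hx y hy hxy => h.2 y hy x hx hxy.symm⟩

lemma Orthog.mono_left {s s' t : Finset V} (h : Orthog G s t) (hs : s' ⊆ s) : Orthog G s' t :=
  ⟨h.1.mono_left hs, fun x hx y hy => h.2 x (hs hx) y hy⟩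

lemma Compat.symm {s t : Finset V} (h : Compat G s t) : Compat G t s := by
  rcases h with h | h | h
  · exact Or.inr (Or.inl h)
  · exact Or.inl h
  · exact Or.inr (Or.inr h.symm)

lemma Compat.subset_or_subset_of_mem {s t : Finset V} (h : Compat G s t) {x : V}
    (hs : x ∈ s) (ht : x ∈ t) : s ⊆ t ∨ t ⊆ s := by
  rcases h with h | h | h
  · exact Or.inl h
  · exact Or.inr h
  · exact absurd ht (disjoint_left.mp h.1 hs)

lemma exists_adj_of_ssubset_of_connected_induce {B C : Finset V}
    (hB : (G.induce (B : Set V)).Connected) (hCB : C ⊂ B) (hC : C.Nonempty) :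
    ∃ u ∈ C, ∃ v ∈ B, v ∉ C ∧ G.Adj u v := by
  obtain ⟨u, hu⟩ := hC
  obtain ⟨z, hzB, hzC⟩ := exists_of_ssubset hCB
  obtain ⟨p⟩ := hB.preconnected ⟨u, hCB.subset hu⟩ ⟨z, hzB⟩
  obtain ⟨d, -, hd₁, hd₂⟩ := p.exists_boundary_dart {w | w.1 ∈ C} hu hzC
  exact ⟨d.fst, hd₁, d.snd, d.snd.2, hd₂, d.adj⟩

lemma exists_maximal_connected_subset {S : Finset V} {y : V} (hy : y ∈ S) :
    ∃ A ⊆ S, y ∈ A ∧ (G.induce (A : Set V)).Connected ∧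
      ∀ T ⊆ S, (G.induce (T : Set V)).Connected → (∃ z ∈ T, z ∈ A) → T ⊆ A := by
  classical
  let P := S.powerset.filter fun T : Finset V => y ∈ T ∧ (G.induce (T : Set V)).Connected
  have hyP : {y} ∈ P := by
    refine mem_filter.mpr
      ⟨mem_powerset.mpr (singleton_subset_iff.mpr hy), mem_singleton_self y, ?_⟩
    rw [coe_singleton, induce_singleton_eq_top]
    exact connected_top
  obtain ⟨A, hA, hAmax⟩ := P.exists_maximal ⟨_, hyP⟩
  simp only [P, mem_filter, mem_powerset] at hA hAmax
  refine ⟨A, hA.1, hA.2.1, hA.2.2, fun T hTS hT hAT => ?_⟩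
  have hunion : (G.induce ((A ∪ T : Finset V) : Set V)).Connected := by
    obtain ⟨z, hzT, hzA⟩ := hAT
    rw [coe_union]
    exact induce_union_connected hA.2.2.preconnected hT.preconnected ⟨z, hzA, hzT⟩
  exact subset_union_right.trans
    (hAmax ⟨union_subset hA.1 hTS, mem_union_left _ hA.2.1, hunion⟩ subset_union_left)

lemma exists_minimal_mem_of_compat {F : Finset (Finset V)}
    (hF : ∀ s ∈ F, ∀ t ∈ F, Compat G s t) {x : V} (hx : ∃ C ∈ F, x ∈ C) :
    ∃ B ∈ F, x ∈ B ∧ ∀ C ∈ F, x ∈ C → B ⊆ C := by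
  obtain ⟨B, ⟨hBF, hxB⟩, hBmin⟩ :=
    exists_minimal_of_wellFoundedLT (fun B => B ∈ F ∧ x ∈ B) hx
  refine ⟨B, hBF, hxB, fun C hCF hxC => ?_⟩
  rcases (hF B hBF C hCF).subset_or_subset_of_mem hxB hxC with h | h
  · exact h
  · exact hBmin ⟨hCF, hxC⟩ h

lemma exists_mem_forall_ssubset_notMem {F : Finset (Finset V)}
    (hF : ∀ s ∈ F, ∀ t ∈ F, Compat G s t) {B : Finset V}
    (hB : (G.induce (B : Set V)).Connected) :
    ∃ x ∈ B, ∀ C ∈ F, C ⊂ B → x ∉ C := by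
  classical
  by_contra! hcover
  obtain ⟨⟨x, hxB⟩⟩ := hB.nonempty
  obtain ⟨C₀, hC₀F, hC₀B, hxC₀⟩ := hcover x hxB
  obtain ⟨C, hC, hCmax⟩ :=
    (F.filter fun C => C ⊂ B ∧ x ∈ C).exists_maximal ⟨C₀, mem_filter.mpr ⟨hC₀F, hC₀B, hxC₀⟩⟩
  simp only [mem_filter] at hC hCmax
  obtain ⟨hCF, hCB, hxC⟩ := hC
  obtain ⟨u, huC, v, hvB, hvC, huv⟩ :=
    exists_adj_of_ssubset_of_connected_induce hB hCB ⟨x, hxC⟩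
  obtain ⟨C', hC'F, hC'B, hvC'⟩ := hcover v hvB
  rcases hF C hCF C' hC'F with h | h | h
  · exact hvC (hCmax ⟨hC'F, hC'B, h hxC⟩ h hvC')
  · exact hvC (h hvC')
  · exact h.2 u huC v hvC' huv

lemma IsNestedSet.insert [Fintype V] [DecidableEq V] {F : Finset (Finset V)}
    (hF : IsNestedSet G F)
    {A : Finset V} (hA : (G.induce (A : Set V)).Connected) (hAF : ∀ C ∈ F, Compat G A C) :
    IsNestedSet G (insert A F) := by
  obtain ⟨huniv, hconn, hcompat⟩ := hF
  refine ⟨mem_insert_of_mem huniv, ?_, ?_⟩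
  · intro s hs
    rcases mem_insert.mp hs with rfl | hs
    · exact hA
    · exact hconn s hs
  · intro s hs t ht
    rcases mem_insert.mp hs with rfl | hsF <;> rcases mem_insert.mp ht with rfl | htF
    · exact Or.inl subset_rfl
    · exact hAF t htF
    · exact (hAF s hsF).symm
    · exact hcompat s hsF t htF

lemma compat_of_maximal_connected_subset_erase [DecidableEq V] {F : Finset (Finset V)}
    (hcompat : ∀ s ∈ F, ∀ t ∈ F, Compat G s t)
    (hconn : ∀ s ∈ F, (G.induce (s : Set V)).Connected)
    {B : Finset V} (hB : B ∈ F) {x : V} (hxmin : ∀ C ∈ F, x ∈ C → B ⊆ C)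
    {A : Finset V} (hAB : A ⊆ B.erase x)
    (hAmax : ∀ T ⊆ B.erase x, (G.induce (T : Set V)).Connected → (∃ z ∈ T, z ∈ A) → T ⊆ A) :
    ∀ C ∈ F, Compat G A C := by
  have hAB' : A ⊆ B := hAB.trans (erase_subset x B)
  intro C hC
  rcases hcompat B hB C hC with hBC | hCB | horth
  · exact Or.inl (hAB'.trans hBC)
  · by_cases hxC : x ∈ C
    · exact Or.inl (hAB'.trans (hxmin C hC hxC))
    have hCB' : C ⊆ B.erase x := fun c hc => mem_erase.mpr ⟨fun h => hxC (h ▸ hc), hCB hc⟩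
    by_cases hmeet : ∃ z ∈ C, z ∈ A
    · exact Or.inr (Or.inl (hAmax C hCB' (hconn C hC) hmeet))
    push Not at hmeet
    refine Or.inr (Or.inr ⟨disjoint_right.mpr hmeet, fun a ha c hc hac => hmeet c hc ?_⟩)
    have hpair : ({a, c} : Finset V) ⊆ B.erase x :=
      insert_subset (hAB ha) (singleton_subset_iff.mpr (hCB' hc))
    refine hAmax {a, c} hpair ?_ ⟨a, mem_insert_self a _, ha⟩
      (mem_insert_of_mem (mem_singleton_self c))
    rw [coe_pair]
    exact induce_pair_connected_of_adj hac
  · exact Or.inr (Or.inr (horth.mono_left hAB'))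

lemma IsNestedSet.eq_of_same_least_mem [Fintype V] {F : Finset (Finset V)}
    (hF : IsNestedSet G F)
    (hmax : ∀ F' : Finset (Finset V), IsNestedSet G F' → F ⊆ F' → F' = F)
    {B : Finset V} (hB : B ∈ F) {x y : V} (hx : x ∈ B) (hy : y ∈ B)
    (hxmin : ∀ C ∈ F, x ∈ C → B ⊆ C) (hymin : ∀ C ∈ F, y ∈ C → B ⊆ C) : x = y := by
  classical
  by_contra hne
  obtain ⟨A, hAB, hyA, hA, hAmax⟩ :=
    exists_maximal_connected_subset (G := G) (mem_erase.mpr ⟨Ne.symm hne, hy⟩)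
  have hAcompat := compat_of_maximal_connected_subset_erase hF.2.2 hF.2.1 hB hxmin hAB hAmax
  have hAF : A ∈ F := by
    rw [← hmax _ (hF.insert hA hAcompat) (subset_insert A F)]
    exact mem_insert_self A F
  exact (mem_erase.mp (hAB (hymin A hAF hyA hx))).1 rfl

end

theorem stmt_13_general {V : Type*} [Fintype V] (G : SimpleGraph V)
    (F : Finset (Finset V)) (hF : IsNestedSet G F)
    (hmax : ∀ F' : Finset (Finset V), IsNestedSet G F' → F ⊆ F' → F' = F) :
    F.card = Fintype.card V := by
  choose m hmF hmx hmmin using fun x =>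
    exists_minimal_mem_of_compat hF.2.2 (x := x) ⟨univ, hF.1, mem_univ x⟩
  rw [← card_univ]
  refine (card_bij (fun x _ => m x) (fun x _ => hmF x) (fun x _ y _ hxy => ?_) ?_).symm
  · exact hF.eq_of_same_least_mem hmax (hmF x) (hmx x) (hxy ▸ hmx y) (hmmin x)
      (hxy ▸ hmmin y)
  · intro B hB
    obtain ⟨x, hxB, hx⟩ := exists_mem_forall_ssubset_notMem hF.2.2 (hF.2.1 B hB)
    exact ⟨x, mem_univ x,
      (hmmin x B hB hxB).eq_or_ssubset.resolve_right fun h => hx _ (hmF x) h (hmx x)⟩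

theorem stmt_13 {V : Type*} [Fintype V] (G : SimpleGraph V) (hG : G.Connected)
    (F : Finset (Finset V)) (hF : IsNestedSet G F)
    (hmax : ∀ F' : Finset (Finset V), IsNestedSet G F' → F ⊆ F' → F' = F) :
    F.card = Fintype.card V :=
  stmt_13_general G F hF hmax
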